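/- arXiv:2109.15210 — 2 statements merged into one kernel-verified Lean document; each statement's English description precedes it below -/
import Mathlib

section
/- Let G be a group with left-invariant metric d, Γ ≤ G with fundamental domain V satisfying V ⊆ B(e, r₊). For a bounded set B ⊆ G define the inner Γ-approximation B_Γ := (B ∩ Γ)·V. Then B_{−r₊} ⊆ B_Γ ⊆ B_{+r₊}, where B_{−r} = {x ∈ B : B(x,r) ⊆ B} and B_{+r} = ∪_{x∈B} B(x,r). -/
open Pointwise Metric

section IsometricTranslates

variable {G : Type*} [Group G] [PseudoMetricSpace G] [IsIsometricSMul G G] {r : ℝ} {V : Set G}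

theorem dist_mul_right_eq_dist_one (g v : G) : dist g (g * v) = dist 1 v := by
  simpa using dist_mul_left g 1 v

theorem mul_subset_iUnion_ball (hV : V ⊆ ball 1 r) (S : Set G) :
    S * V ⊆ ⋃ x ∈ S, ball x r := by
  rintro _ ⟨x, hx, v, hv, rfl⟩
  refine Set.mem_biUnion hx ?_
  rw [mem_ball, dist_comm, dist_mul_right_eq_dist_one, dist_comm]
  exact hV hv

theorem mem_inter_mul_of_ball_subset {S : Set G} (hcover : ∀ g : G, g ∈ S * V) (hV : V ⊆ ball 1 r)
    {B : Set G} {x : G} (hx : ball x r ⊆ B) : x ∈ (B ∩ S) * V := by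
  obtain ⟨γ, hγS, v, hv, rfl⟩ := hcover x
  have hγ : γ ∈ ball (γ * v) r := by
    rw [mem_ball, dist_mul_right_eq_dist_one, dist_comm]
    exact hV hv
  exact ⟨γ, ⟨hx hγ, hγS⟩, v, hv, rfl⟩

end IsometricTranslates

theorem stmt11_general {G : Type*} [Group G] [MetricSpace G]
    (hinv : ∀ g x y : G, dist (g * x) (g * y) = dist x y)
    (Γ : Subgroup G) (V : Set G)
    (hfd : ∀ g : G, ∃! γ : G, γ ∈ Γ ∧ ∃ v ∈ V, g = γ * v)
    (r : ℝ) (hVb : V ⊆ ball (1 : G) r)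
    (B : Set G) :
    {x ∈ B | ball x r ⊆ B} ⊆ (B ∩ (Γ : Set G)) * V ∧
    (B ∩ (Γ : Set G)) * V ⊆ ⋃ x ∈ B, ball x r := by
  have : IsIsometricSMul G G := ⟨fun g => Isometry.of_dist_eq (hinv g)⟩
  have hcover (g : G) : g ∈ (Γ : Set G) * V := by
    obtain ⟨γ, ⟨hγ, v, hv, rfl⟩, -⟩ := hfd g
    exact ⟨γ, hγ, v, hv, rfl⟩
  exact ⟨fun x hx => mem_inter_mul_of_ball_subset hcover hVb hx.2,
    (Set.mul_subset_mul_right Set.inter_subset_left).trans (mul_subset_iUnion_ball hVb B)⟩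

/-- The inner `Γ`-approximation `B_Γ = (B ∩ Γ)·V` of a bounded set `B`
satisfies `B_{−r₊} ⊆ B_Γ ⊆ B_{+r₊}`. -/
theorem stmt11 {G : Type*} [Group G] [MetricSpace G]
    (hinv : ∀ g x y : G, dist (g * x) (g * y) = dist x y)
    (Γ : Subgroup G) (V : Set G)
    (hfd : ∀ g : G, ∃! γ : G, γ ∈ Γ ∧ ∃ v ∈ V, g = γ * v)
    (r : ℝ) (hr : 0 < r) (hVb : V ⊆ ball (1 : G) r)
    (B : Set G) (hB : Bornology.IsBounded B) :
    {x ∈ B | ball x r ⊆ B} ⊆ (B ∩ (Γ : Set G)) * V ∧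
    (B ∩ (Γ : Set G)) * V ⊆ ⋃ x ∈ B, ball x r :=
  stmt11_general hinv Γ V hfd r hVb B
end

section
/- Let G_H be a group, β : G_H × G_H → ℝ^m a normalized cocycle, and G = G_H ×_β ℝ^m the corresponding central extension. Let Γ_H ≤ G_H and Γ₀ ≤ ℝ^m be subgroups with β(Γ_H × Γ_H) ⊆ Γ₀, and let Γ = Γ_H ×_β Γ₀ ≤ G. If V_H is a fundamental domain for Γ_H in G_H and V₀ is a fundamental domain for Γ₀ in ℝ^m, then V := V_H × V₀ is a fundamental domain for Γ in G. -/
/-!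
The `H`-coordinate of `p = (g, x)` is decomposed first, as `g = γ * v` with `γ ∈ Γ_H`, `v ∈ V_H`.
The twist `β γ v` then depends only on data already fixed, so subtracting it reduces the second
coordinate to the decomposition `x - β γ v = c + w` with `c ∈ Γ₀`, `w ∈ V₀`.
-/

theorem existsUnique_twisted_decomposition {H A : Type*} [Group H] [AddGroup A]
    (β : H → H → A) (ΓH : Subgroup H) (Γ₀ : AddSubgroup A) (VH : Set H) (V₀ : Set A)
    (hVH : ∀ g : H, ∃! γ : H, γ ∈ ΓH ∧ ∃ v ∈ VH, g = γ * v)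
    (hV₀ : ∀ x : A, ∃! c : A, c ∈ Γ₀ ∧ ∃ w ∈ V₀, x = c + w) (p : H × A) :
    ∃! q : H × A, (q.1 ∈ ΓH ∧ q.2 ∈ Γ₀) ∧
      ∃ v ∈ VH, ∃ w ∈ V₀, p = (q.1 * v, q.2 + w + β q.1 v) := by
  obtain ⟨g, x⟩ := p
  obtain ⟨γ, ⟨hγ, v, hv, hg⟩, hγ_unique⟩ := hVH g
  obtain ⟨c, ⟨hc, w, hw, hx⟩, hc_unique⟩ := hV₀ (x - β γ v)
  refine ⟨(γ, c), ⟨⟨hγ, hc⟩, v, hv, w, hw, ?_⟩, ?_⟩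
  · rw [← hx, sub_add_cancel, ← hg]
  rintro ⟨γ', c'⟩ ⟨⟨hγ', hc'⟩, v', hv', w', hw', hp⟩
  obtain ⟨hg', hx'⟩ := Prod.mk.injEq .. ▸ hp
  obtain rfl : γ' = γ := hγ_unique γ' ⟨hγ', v', hv', hg'⟩
  obtain rfl : v' = v := mul_left_cancel (hg'.symm.trans hg)
  obtain rfl : c' = c := hc_unique c' ⟨hc', w', hw', by rw [hx', add_sub_cancel_right]⟩
  rfl

theorem stmt13_general {H : Type*} [Group H] (m : ℕ) (β : H → H → (Fin m → ℝ))
    (ΓH : Subgroup H) (Γ₀ : AddSubgroup (Fin m → ℝ))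
    (VH : Set H) (V₀ : Set (Fin m → ℝ))
    (hVH : ∀ g : H, ∃! γ : H, γ ∈ ΓH ∧ ∃ v ∈ VH, g = γ * v)
    (hV₀ : ∀ x : Fin m → ℝ, ∃! c : Fin m → ℝ, c ∈ Γ₀ ∧ ∃ w ∈ V₀, x = c + w) :
    ∀ p : H × (Fin m → ℝ), ∃! q : H × (Fin m → ℝ),
      (q.1 ∈ ΓH ∧ q.2 ∈ Γ₀) ∧ ∃ v ∈ VH, ∃ w ∈ V₀, p = (q.1 * v, q.2 + w + β q.1 v) :=
  existsUnique_twisted_decomposition β ΓH Γ₀ VH V₀ hVH hV₀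

/-- If `V_H` and `V₀` are fundamental domains for `Γ_H ≤ G_H` and `Γ₀ ≤ ℝ^m`,
then `V_H × V₀` is a fundamental domain for `Γ_H ×_β Γ₀` in the central
extension `G_H ×_β ℝ^m`. -/
theorem stmt13 {H : Type*} [Group H] (m : ℕ) (β : H → H → (Fin m → ℝ))
    (hcoc : ∀ g₁ g₂ g₃ : H, β g₂ g₃ + β g₁ (g₂ * g₃) = β (g₁ * g₂) g₃ + β g₁ g₂)
    (hnorm : β 1 1 = 0)
    (ΓH : Subgroup H) (Γ₀ : AddSubgroup (Fin m → ℝ))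
    (hβΓ : ∀ γ ∈ ΓH, ∀ γ' ∈ ΓH, β γ γ' ∈ Γ₀)
    (VH : Set H) (V₀ : Set (Fin m → ℝ))
    (hVH : ∀ g : H, ∃! γ : H, γ ∈ ΓH ∧ ∃ v ∈ VH, g = γ * v)
    (hV₀ : ∀ x : Fin m → ℝ, ∃! c : Fin m → ℝ, c ∈ Γ₀ ∧ ∃ w ∈ V₀, x = c + w) :
    ∀ p : H × (Fin m → ℝ), ∃! q : H × (Fin m → ℝ),
      (q.1 ∈ ΓH ∧ q.2 ∈ Γ₀) ∧ ∃ v ∈ VH, ∃ w ∈ V₀, p = (q.1 * v, q.2 + w + β q.1 v) :=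
  stmt13_general m β ΓH Γ₀ VH V₀ hVH hV₀
end
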